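/- arXiv:2307.13171 — 5 statements merged into one kernel-verified Lean document; each statement's English description precedes it below -/
import Mathlib

section
/- Let X, Y, Z be topological spaces, T : X → 2^Y a continuous set-valued map with nonempty compact values, and f : Y × Z → ℝ a pseudo-continuous function. Then the set-valued map M : X × Z → 2^Y defined by M(x,z) = { y ∈ T(x) : f(y,z) ≤ f(w,z) for all w ∈ T(x) } is upper semicontinuous with nonempty compact values. -/
/-- Set-valued upper semicontinuity: for each open `V ⊇ T x` eventually `T x' ⊆ V`. -/
def SVUpperSemicont {X Y : Type*} [TopologicalSpace X] [TopologicalSpace Y]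
    (T : X → Set Y) : Prop :=
  ∀ x : X, ∀ V : Set Y, IsOpen V → T x ⊆ V → ∀ᶠ x' in nhds x, T x' ⊆ V

/-- Set-valued lower semicontinuity. -/
def SVLowerSemicont {X Y : Type*} [TopologicalSpace X] [TopologicalSpace Y]
    (T : X → Set Y) : Prop :=
  ∀ x : X, ∀ V : Set Y, IsOpen V → (T x ∩ V).Nonempty → ∀ᶠ x' in nhds x, (T x' ∩ V).Nonempty

/-- Upper pseudo-continuity of a real-valued function. -/
def UpperPseudoCont {W : Type*} [TopologicalSpace W] (f : W → ℝ) : Prop :=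
  ∀ x y : W, f x < f y → ∀ᶠ x' in nhds x, f x' < f y

/-- Pseudo-continuity: upper and lower (i.e. `-f` upper) pseudo-continuous. -/
def PseudoCont {W : Type*} [TopologicalSpace W] (f : W → ℝ) : Prop :=
  UpperPseudoCont f ∧ UpperPseudoCont (fun w => -f w)

open Filter Topology Set

lemma lpc {W : Type*} [TopologicalSpace W] {f : W → ℝ}
    (hf : UpperPseudoCont (fun w => -f w)) {u v : W} (h : f v < f u) :
    ∀ᶠ u' in 𝓝 u, f v < f u' := by
  have := hf u v (by simpa using h)
  simpa using this

lemma exists_min {W : Type*} [TopologicalSpace W] {f : W → ℝ}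
    (hf : UpperPseudoCont (fun w => -f w)) {K : Set W} (hK : IsCompact K)
    (hne : K.Nonempty) : ∃ y ∈ K, ∀ w ∈ K, f y ≤ f w := by
  by_contra h
  push_neg at h
  choose w hwK hw using h
  have hU : ∀ y (hy : y ∈ K), {y' | f (w y hy) < f y'} ∈ 𝓝 y := fun y hy =>
    lpc hf (hw y hy)
  obtain ⟨t, ht⟩ := hK.elim_nhds_subcover' (fun y hy => {y' | f (w y hy) < f y'}) hU
  have htne : t.Nonempty := by
    rcases hne with ⟨y0, hy0⟩
    rcases mem_iUnion₂.1 (ht hy0) with ⟨i, hi, _⟩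
    exact ⟨i, hi⟩
  obtain ⟨j, hj, hjmin⟩ := t.exists_min_image (fun y => f (w y.1 y.2)) htne
  have hwj : w j.1 j.2 ∈ K := hwK _ _
  rcases mem_iUnion₂.1 (ht hwj) with ⟨i, hi, hmem⟩
  exact absurd (hjmin i hi) (not_le.2 hmem)

lemma dichotomy {W : Type*} [TopologicalSpace W] {f : W → ℝ}
    (hf : PseudoCont f) {q0 q1 : W} (h : f q0 < f q1) :
    ∃ c : ℝ, (∀ᶠ q in 𝓝 q0, f q < c) ∧ (∀ᶠ q in 𝓝 q1, c ≤ f q) := by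
  by_cases hv : ∃ v, f q0 < f v ∧ f v < f q1
  · rcases hv with ⟨v, hv0, hv1⟩
    exact ⟨f v, hf.1 q0 v hv0, (lpc hf.2 hv1).mono fun q hq => le_of_lt hq⟩
  · push_neg at hv
    exact ⟨f q1, hf.1 q0 q1 h, (lpc hf.2 h).mono fun q hq => hv q hq⟩

theorem stmt0 {X Y Z : Type*} [TopologicalSpace X] [TopologicalSpace Y] [TopologicalSpace Z]
    (T : X → Set Y) (f : Y × Z → ℝ)
    (hTu : SVUpperSemicont T) (hTl : SVLowerSemicont T)
    (hTne : ∀ x, (T x).Nonempty) (hTc : ∀ x, IsCompact (T x))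
    (hf : PseudoCont f) :
    SVUpperSemicont (fun p : X × Z =>
      {y ∈ T p.1 | ∀ w ∈ T p.1, f (y, p.2) ≤ f (w, p.2)}) ∧
    (∀ p : X × Z, IsCompact {y ∈ T p.1 | ∀ w ∈ T p.1, f (y, p.2) ≤ f (w, p.2)}) ∧
    (∀ p : X × Z, {y ∈ T p.1 | ∀ w ∈ T p.1, f (y, p.2) ≤ f (w, p.2)}.Nonempty) := by
  set M : X × Z → Set Y := fun p =>
    {y ∈ T p.1 | ∀ w ∈ T p.1, f (y, p.2) ≤ f (w, p.2)} with hM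
  have hMsubT : ∀ p, M p ⊆ T p.1 := fun p y hy => hy.1
  -- nonempty values
  have hMne : ∀ p : X × Z, (M p).Nonempty := by
    intro p
    obtain ⟨y, hyT, hy⟩ := exists_min (f := fun y : Y => f (y, p.2))
      (fun u v huv => by
        have := lpc hf.2 (u := (u, p.2)) (v := (v, p.2)) (by simpa using huv)
        have h2 := ((Continuous.tendsto (by continuity : Continuous fun y : Y => (y, p.2)) u)).eventually this
        simpa using h2) (hTc p.1) (hTne p.1)
    exact ⟨y, hyT, hy⟩
  -- compact values
  have hMc : ∀ p : X × Z, IsCompact (M p) := by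
    intro p
    have hclosed : IsClosed {y : Y | ∀ w ∈ T p.1, f (y, p.2) ≤ f (w, p.2)} := by
      rw [← isOpen_compl_iff, isOpen_iff_mem_nhds]
      intro y hy
      simp only [mem_compl_iff, mem_setOf_eq, not_forall] at hy
      obtain ⟨w, hwT, hw⟩ := hy
      have := lpc hf.2 (u := (y, p.2)) (v := (w, p.2)) (lt_of_not_ge hw)
      have h2 := ((Continuous.tendsto (by continuity : Continuous fun y : Y => (y, p.2)) y)).eventually this
      refine h2.mono fun y' hy' => ?_
      simp only [mem_compl_iff, mem_setOf_eq, not_forall]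
      exact ⟨w, hwT, not_le.2 hy'⟩
    exact (hTc p.1).inter_right hclosed
  refine ⟨?_, hMc, hMne⟩
  -- upper semicontinuity
  rintro ⟨x, z⟩ V hV hMV
  by_contra hcon
  have hfreq : ∃ᶠ p' in 𝓝 (x, z), ¬ M p' ⊆ V := not_eventually.1 hcon
  classical
  have hsel : ∀ p' : X × Z, ∃ u : Y, ¬ M p' ⊆ V → u ∈ M p' ∧ u ∉ V := by
    intro p'
    by_cases h : M p' ⊆ V
    · exact ⟨(hTne p'.1).choose, fun hc => absurd h hc⟩
    · obtain ⟨u, huM, huV⟩ := not_subset.1 h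
      exact ⟨u, fun _ => ⟨huM, huV⟩⟩
  choose y hy using hsel
  set A : Set (X × Z) := {p' | ¬ M p' ⊆ V} with hA
  set L : Filter (X × Z) := 𝓝 (x, z) ⊓ 𝓟 A with hL
  have hLne : L.NeBot := frequently_iff_neBot.1 hfreq
  have hLle : L ≤ 𝓝 (x, z) := inf_le_left
  have hfstL : Tendsto Prod.fst L (𝓝 x) :=
    (continuous_fst.tendsto (x, z)).comp (tendsto_id.mono_left hLle)
  have hsndL : Tendsto Prod.snd L (𝓝 z) :=
    (continuous_snd.tendsto (x, z)).comp (tendsto_id.mono_left hLle)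
  have hyML : ∀ᶠ p' in L, y p' ∈ M p' ∧ y p' ∉ V := by
    have : ∀ᶠ p' in L, p' ∈ A := eventually_inf_principal.2 (Eventually.of_forall fun _ h => h)
    exact this.mono fun p' hp' => hy p' hp'
  -- the image filter clusters inside T x
  have hmapU : map y L ≤ 𝓝ˢ (T x) := by
    rw [(hasBasis_nhdsSet (T x)).ge_iff]
    rintro W ⟨hWo, hWs⟩
    have h1 : ∀ᶠ p' in L, T p'.1 ⊆ W := hfstL.eventually (hTu x W hWo hWs)
    exact mem_map.2 ((h1.and hyML).mono fun p' ⟨hTW, hyM, _⟩ => hTW (hMsubT _ hyM))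
  have hGne : (map y L).NeBot := hLne.map y
  have hcluster : ∃ a ∈ T x, ClusterPt a (map y L) := by
    by_contra hno
    push_neg at hno
    have hdisj : Disjoint (𝓝ˢ (T x)) (map y L) :=
      (hTc x).disjoint_nhdsSet_left.2 fun a ha =>
        not_not.1 (clusterPt_iff_not_disjoint.not.1 (hno a ha))
    exact hGne.ne (by simpa [disjoint_iff, inf_of_le_right hmapU] using hdisj.eq_bot)
  obtain ⟨a, haT, hacl⟩ := hcluster
  -- a is not in V
  have haV : a ∉ V := by
    have hVc : Vᶜ ∈ map y L := mem_map.2 (hyML.mono fun p' hp' => hp'.2)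
    have : a ∈ closure Vᶜ :=
      mem_closure_iff_clusterPt.2 (hacl.mono (le_principal_iff.2 hVc))
    rwa [hV.isClosed_compl.closure_eq] at this
  -- hence a is not a minimizer on T x : some w beats it
  have haM : a ∉ M (x, z) := fun h => haV (hMV h)
  have hwex : ∃ w ∈ T x, f (w, z) < f (a, z) := by
    by_contra h
    push_neg at h
    exact haM ⟨haT, fun w hw => le_of_not_gt fun hlt => absurd (h w hw) (not_le.2 hlt)⟩
  obtain ⟨w, hwT, hwa⟩ := hwex
  -- pass to the filter H refining L along which y tends to a
  set H : Filter (X × Z) := L ⊓ comap y (𝓝 a) with hH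
  have hmapH : map y H = map y L ⊓ 𝓝 a := Filter.push_pull y L (𝓝 a)
  have hHne : H.NeBot := by
    refine NeBot.of_map (m := y) ?_
    rw [hmapH]
    have hcl : NeBot (𝓝 a ⊓ map y L) := hacl
    rwa [inf_comm] at hcl
  have hHleL : H ≤ L := inf_le_left
  have hyH : Tendsto y H (𝓝 a) := tendsto_iff_comap.2 inf_le_right
  have hsndH : Tendsto Prod.snd H (𝓝 z) := hsndL.mono_left hHleL
  have hfstH : Tendsto Prod.fst H (𝓝 x) := hfstL.mono_left hHleL
  have hpairH : Tendsto (fun p' => (y p', p'.2)) H (𝓝 (a, z)) := hyH.prodMk_nhds hsndH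
  -- dichotomy: separating level c
  obtain ⟨c, h1, h2⟩ := dichotomy hf hwa
  -- extract product neighborhoods from h1
  obtain ⟨N, O, hNo, hwN, hOo, hzO, hNO⟩ := mem_nhds_prod_iff'.1 h1
  -- lower semicontinuity of T : points of T x' near w
  have hTlN : ∀ᶠ p' in H, (T p'.1 ∩ N).Nonempty :=
    hfstH.eventually (hTl x N hNo ⟨w, hwT, hwN⟩)
  have hzO' : ∀ᶠ p' in H, p'.2 ∈ O := hsndH.eventually (hOo.mem_nhds hzO)
  have hcy : ∀ᶠ p' in H, c ≤ f (y p', p'.2) := hpairH.eventually h2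
  have hyMH : ∀ᶠ p' in H, y p' ∈ M p' := (hyML.filter_mono hHleL).mono fun _ h => h.1
  have : ∀ᶠ _ in H, False := by
    filter_upwards [hTlN, hzO', hcy, hyMH] with p' ⟨w', hw'T, hw'N⟩ hO hc hyM
    have hfw' : f (w', p'.2) < c := hNO ⟨hw'N, hO⟩
    have hmin : f (y p', p'.2) ≤ f (w', p'.2) := hyM.2 w' hw'T
    exact absurd (hmin.trans_lt hfw') (not_lt.2 hc)
  obtain ⟨_, hfalse⟩ := this.exists
  exact hfalse
end

section
/- With K = [0,1]², X_1(x,y) = [x+1, y+2], X_2(x,y) = [y+1, x+2], θ_1(x,y) = x³ − y, θ_2(x,y) = x + y³, and the Euclidean norm on ℝ², the point (1,1) is the unique projected solution of this generalized Nash game. -/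
/-- `(a, b)` is a projected solution of the game with `K = [0,1]²`,
`X₁(a,b) = [a+1, b+2]`, `X₂(a,b) = [b+1, a+2]`, `θ₁(x,y) = x³ - y`,
`θ₂(x,y) = x + y³`, with the Euclidean norm on ℝ². -/
def IsProjSol (a b : ℝ) : Prop :=
  a ∈ Set.Icc (0 : ℝ) 1 ∧ b ∈ Set.Icc (0 : ℝ) 1 ∧
  ∃ y₁ y₂ : ℝ, y₁ ∈ Set.Icc (a + 1) (b + 2) ∧ y₂ ∈ Set.Icc (b + 1) (a + 2) ∧
    (∀ u ∈ Set.Icc (0 : ℝ) 1, ∀ v ∈ Set.Icc (0 : ℝ) 1,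
      Real.sqrt ((y₁ - a) ^ 2 + (y₂ - b) ^ 2) ≤ Real.sqrt ((y₁ - u) ^ 2 + (y₂ - v) ^ 2)) ∧
    (∀ z ∈ Set.Icc (a + 1) (b + 2), y₁ ^ 3 - y₂ ≤ z ^ 3 - y₂) ∧
    (∀ z ∈ Set.Icc (b + 1) (a + 2), y₁ + y₂ ^ 3 ≤ y₁ + z ^ 3)

theorem stmt12 (a b : ℝ) : IsProjSol a b ↔ a = 1 ∧ b = 1 := by
  constructor
  · rintro ⟨⟨ha0, ha1⟩, ⟨hb0, hb1⟩, y₁, y₂, ⟨hy₁l, hy₁u⟩, ⟨hy₂l, hy₂u⟩, hproj, hθ₁, hθ₂⟩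
    -- y₁ = a + 1
    have h1 : y₁ ^ 3 - y₂ ≤ (a + 1) ^ 3 - y₂ :=
      hθ₁ (a + 1) ⟨le_refl _, by linarith⟩
    have hy₁ : y₁ = a + 1 := le_antisymm
      ((Odd.strictMono_pow (R := ℝ) (by decide : Odd 3)).le_iff_le.mp (by linarith)) hy₁l
    have h2 : y₁ + y₂ ^ 3 ≤ y₁ + (b + 1) ^ 3 :=
      hθ₂ (b + 1) ⟨le_refl _, by linarith⟩
    have hy₂ : y₂ = b + 1 := le_antisymm
      ((Odd.strictMono_pow (R := ℝ) (by decide : Odd 3)).le_iff_le.mp (by linarith)) hy₂l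
    have hkey := hproj 1 ⟨by norm_num, le_refl 1⟩ 1 ⟨by norm_num, le_refl 1⟩
    rw [hy₁, hy₂] at hkey
    have hsq : (a + 1 - a) ^ 2 + (b + 1 - b) ^ 2 ≤ (a + 1 - 1) ^ 2 + (b + 1 - 1) ^ 2 := by
      exact (Real.sqrt_le_sqrt_iff (by positivity)).mp hkey
    have h2le : (2 : ℝ) ≤ a ^ 2 + b ^ 2 := by nlinarith
    constructor <;> nlinarith [sq_nonneg (a - 1), sq_nonneg (b - 1)]
  · rintro ⟨rfl, rfl⟩
    refine ⟨⟨by norm_num, le_refl 1⟩, ⟨by norm_num, le_refl 1⟩, 2, 2,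
      ⟨by norm_num, by norm_num⟩, ⟨by norm_num, by norm_num⟩, ?_, ?_, ?_⟩
    · intro u ⟨hu0, hu1⟩ v ⟨hv0, hv1⟩
      apply Real.sqrt_le_sqrt
      nlinarith
    · rintro z ⟨hz, _⟩
      nlinarith [sq_nonneg (z - 2), mul_nonneg (mul_nonneg (by linarith : (0:ℝ) ≤ z - 2) (by linarith : (0:ℝ) ≤ z - 2)) (by linarith : (0:ℝ) ≤ z - 2)]
    · rintro z ⟨hz, _⟩
      nlinarith [sq_nonneg (z - 2), mul_nonneg (mul_nonneg (by linarith : (0:ℝ) ≤ z - 2) (by linarith : (0:ℝ) ≤ z - 2)) (by linarith : (0:ℝ) ≤ z - 2)]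
end

section
/- Let X ⊆ ℝⁿ be convex and nonempty with n = n_1 + ⋯ + n_p (p players). For x ∈ X define X_ν(x) = { y^ν ∈ ℝ^{n_ν} : (y^ν, x^{−ν}) ∈ X }. If x̂ ∈ X and ŷ^ν ∈ X_ν(x̂) for each ν, then for every t with (p−1)/p < t < 1, the point t x̂ + (1−t) ŷ belongs to X, where ŷ = (ŷ¹, …, ŷᵖ). -/
theorem stmt13 {p : ℕ} (hp : 0 < p) {n : Fin p → ℕ}
    (X : Set (∀ ν, EuclideanSpace ℝ (Fin (n ν)))) (hX : Convex ℝ X)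
    (xh : ∀ ν, EuclideanSpace ℝ (Fin (n ν))) (hxh : xh ∈ X)
    (yh : ∀ ν, EuclideanSpace ℝ (Fin (n ν)))
    (hyh : ∀ ν, Function.update xh ν (yh ν) ∈ X)
    (t : ℝ) (ht1 : ((p : ℝ) - 1) / p < t) (ht2 : t < 1) :
    t • xh + (1 - t) • yh ∈ X := by
  have hp' : (0:ℝ) < p := by exact_mod_cast hp
  have hw0 : (0:ℝ) ≤ p * t - p + 1 := by
    rw [div_lt_iff₀ hp'] at ht1
    nlinarith
  set w : Option (Fin p) → ℝ := fun i => i.elim (p * t - p + 1) (fun _ => 1 - t) with hw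
  set z : Option (Fin p) → (∀ ν, EuclideanSpace ℝ (Fin (n ν))) :=
    fun i => i.elim xh (fun ν => Function.update xh ν (yh ν)) with hz
  have key : t • xh + (1 - t) • yh = ∑ i : Option (Fin p), w i • z i := by
    rw [Fintype.sum_option]
    funext ν
    simp only [Pi.add_apply, Pi.smul_apply, Finset.sum_apply, hw, hz, Option.elim]
    have hsplit : ∑ μ : Fin p, (1 - t) • (Function.update xh μ (yh μ)) ν
        = (1 - t) • yh ν + ∑ μ ∈ Finset.univ.erase ν, (1 - t) • xh ν := by
      rw [← Finset.add_sum_erase _ _ (Finset.mem_univ ν), Function.update_self]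
      congr 1
      refine Finset.sum_congr rfl fun μ hμ => ?_
      rw [Function.update_of_ne (Finset.ne_of_mem_erase hμ).symm]
    rw [hsplit, Finset.sum_const, Finset.card_erase_of_mem (Finset.mem_univ ν),
      Finset.card_univ, Fintype.card_fin]
    have hcast : ((p - 1 : ℕ) : ℝ) = (p : ℝ) - 1 := by
      have : (1:ℕ) ≤ p := hp
      push_cast [this]
      ring
    rw [← Nat.cast_smul_eq_nsmul ℝ, hcast]
    have hc : (p * t - p + 1) + ((p:ℝ) - 1) * (1 - t) = t := by ring
    rw [smul_smul]
    rw [show (p * t - p + 1 : ℝ) = t - ((p:ℝ) - 1) * (1 - t) by linarith [hc]]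
    module
  rw [key]
  refine hX.sum_mem (fun i _ => ?_) ?_ (fun i _ => ?_)
  · cases i with
    | none => exact hw0
    | some ν => simp [hw]; linarith
  · rw [Fintype.sum_option]
    simp only [hw, Option.elim, Finset.sum_const, Finset.card_univ, Fintype.card_fin,
      nsmul_eq_mul]
    ring
  · cases i with
    | none => exact hxh
    | some ν => exact hyh ν
end

section
/- In the jointly convex (Rosen) setting, every projected solution is a classical generalized Nash equilibrium: if x̂ ∈ X is a projected solution witnessed by ŷ ∈ 𝒳(x̂), then ŷ = x̂, and x̂ is a generalized Nash equilibrium in the sense of Rosen. -/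
theorem stmt14 {p : ℕ} (hp : 0 < p) {n : Fin p → ℕ}
    -- an arbitrary norm on ℝⁿ
    (nrm : (∀ ν, EuclideanSpace ℝ (Fin (n ν))) → ℝ)
    (hnrm0 : ∀ v, nrm v = 0 ↔ v = 0)
    (hnrm_add : ∀ v w, nrm (v + w) ≤ nrm v + nrm w)
    (hnrm_smul : ∀ (c : ℝ) v, nrm (c • v) = |c| * nrm v)
    (X : Set (∀ ν, EuclideanSpace ℝ (Fin (n ν)))) (hX : Convex ℝ X) (hXne : X.Nonempty)
    (θ : Fin p → (∀ ν, EuclideanSpace ℝ (Fin (n ν))) → ℝ)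
    (xh : ∀ ν, EuclideanSpace ℝ (Fin (n ν))) (hxh : xh ∈ X)
    (yh : ∀ ν, EuclideanSpace ℝ (Fin (n ν)))
    -- yh ∈ 𝒳(xh)
    (hyhX : ∀ ν, Function.update xh ν (yh ν) ∈ X)
    -- xh is a projection of yh onto X
    (hproj : ∀ x ∈ X, nrm (yh - xh) ≤ nrm (yh - x))
    -- yh is a Nash equilibrium of the game with strategy sets X_ν(xh)
    (hne : ∀ ν, ∀ z : EuclideanSpace ℝ (Fin (n ν)), Function.update xh ν z ∈ X →
      θ ν yh ≤ θ ν (Function.update yh ν z)) :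
    yh = xh ∧
    ∀ ν, ∀ z : EuclideanSpace ℝ (Fin (n ν)), Function.update xh ν z ∈ X →
      θ ν xh ≤ θ ν (Function.update xh ν z) := by
  have hp' : (0:ℝ) < p := by exact_mod_cast hp
  -- the averaged point lies in X
  have hsum : ∑ ν : Fin p, (p:ℝ)⁻¹ • Function.update xh ν (yh ν)
      = xh + (p:ℝ)⁻¹ • (yh - xh) := by
    funext μ
    simp only [Finset.sum_apply, Pi.smul_apply, Pi.add_apply, Pi.sub_apply,
      Function.update_apply]
    have key : ∀ ν : Fin p, (p:ℝ)⁻¹ • Function.update xh ν (yh ν) μ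
        = (p:ℝ)⁻¹ • xh μ + (if μ = ν then (p:ℝ)⁻¹ • (yh μ - xh μ) else 0) := by
      intro ν
      rcases eq_or_ne μ ν with h | h
      · subst h
        simp only [Function.update_self, if_true, smul_sub]
        abel
      · simp [Function.update_of_ne h, h]
    rw [Finset.sum_congr rfl fun ν _ => key ν, Finset.sum_add_distrib,
      Finset.sum_const, Finset.sum_ite_eq, Finset.card_univ, Fintype.card_fin]
    simp only [Finset.mem_univ, if_true]
    congr 1
    rw [← Nat.cast_smul_eq_nsmul ℝ, smul_smul, mul_inv_cancel₀ hp'.ne', one_smul]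
  have hz : xh + (p:ℝ)⁻¹ • (yh - xh) ∈ X := by
    rw [← hsum]
    exact hX.sum_mem (fun ν _ => by positivity)
      (by simp [Finset.card_univ, mul_inv_cancel₀ hp'.ne']) (fun ν _ => hyhX ν)
  set N := nrm (yh - xh) with hN
  have hNnonneg : 0 ≤ N := by
    have h1 := hnrm_add (yh - xh) (-(yh - xh))
    have h2 : nrm (-(yh - xh)) = N := by
      have : -(yh - xh) = (-1 : ℝ) • (yh - xh) := by module
      rw [this, hnrm_smul]; simp [hN]
    simp only [add_neg_cancel, (hnrm0 0).2 rfl, h2] at h1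
    linarith
  have hdiff : yh - (xh + (p:ℝ)⁻¹ • (yh - xh)) = (1 - (p:ℝ)⁻¹) • (yh - xh) := by
    module
  have hple : (p:ℝ)⁻¹ ≤ 1 := by
    rw [inv_le_one_iff₀]; right; exact_mod_cast hp
  have hstep : N ≤ (1 - (p:ℝ)⁻¹) * N := by
    have := hproj _ hz
    rwa [hdiff, hnrm_smul, abs_of_nonneg (by linarith)] at this
  have hN0 : N = 0 := by
    have hpinv : 0 < (p:ℝ)⁻¹ := by positivity
    nlinarith
  have heq : yh = xh := by
    have := (hnrm0 (yh - xh)).1 hN0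
    exact sub_eq_zero.1 this
  refine ⟨heq, fun ν z hzX => ?_⟩
  have := hne ν z hzX
  rwa [heq] at this
end

section
/- In the jointly convex (Rosen) setting, if x̂ ∈ X, ŷ ∈ 𝒳(x̂), and x̂ is a nearest point of X to ŷ (in any norm), then ŷ = x̂. -/
theorem stmt15 {p : ℕ} (hp : 0 < p) {n : Fin p → ℕ}
    -- an arbitrary norm on ℝⁿ
    (nrm : (∀ ν, EuclideanSpace ℝ (Fin (n ν))) → ℝ)
    (hnrm0 : ∀ v, nrm v = 0 ↔ v = 0)
    (hnrm_add : ∀ v w, nrm (v + w) ≤ nrm v + nrm w)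
    (hnrm_smul : ∀ (c : ℝ) v, nrm (c • v) = |c| * nrm v)
    (X : Set (∀ ν, EuclideanSpace ℝ (Fin (n ν)))) (hX : Convex ℝ X) (hXne : X.Nonempty)
    (xh : ∀ ν, EuclideanSpace ℝ (Fin (n ν))) (hxh : xh ∈ X)
    (yh : ∀ ν, EuclideanSpace ℝ (Fin (n ν)))
    (hyhX : ∀ ν, Function.update xh ν (yh ν) ∈ X)
    (hproj : ∀ x ∈ X, nrm (yh - xh) ≤ nrm (yh - x)) :
    yh = xh := by
  have hp' : (0:ℝ) < p := by exact_mod_cast hp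
  set c : ℝ := (p:ℝ)⁻¹ with hc
  have hc0 : 0 < c := by positivity
  have hc1 : c ≤ 1 := by
    rw [hc]
    rw [inv_le_one_iff₀]
    right; exact_mod_cast hp
  -- z = Σ c • update xh ν (yh ν) is in X
  have hzX : (∑ ν : Fin p, c • Function.update xh ν (yh ν)) ∈ X := by
    apply hX.sum_mem (fun ν _ => le_of_lt hc0) _ (fun ν _ => hyhX ν)
    simp [hc, Finset.sum_const, Finset.card_univ]
    field_simp
  set z := ∑ ν : Fin p, c • Function.update xh ν (yh ν) with hz
  have hzeq : yh - z = (1 - c) • (yh - xh) := by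
    funext μ
    have : z μ = c • yh μ + ((p:ℝ) - 1) • (c • xh μ) := by
      rw [hz]
      have hsum : z μ = ∑ ν : Fin p, c • (Function.update xh ν (yh ν) μ) := by
        rw [hz]; simp [Finset.sum_apply]
      rw [← hz, hsum]
      have hupd : ∀ ν : Fin p, Function.update xh ν (yh ν) μ =
          (if ν = μ then yh μ else xh μ) := by
        intro ν
        by_cases h : ν = μ
        · subst h; simp
        · simp [Function.update_of_ne (Ne.symm h), h]
      calc ∑ ν : Fin p, c • (Function.update xh ν (yh ν) μ)
          = ∑ ν : Fin p, ((if ν = μ then c • yh μ - c • xh μ else 0) + c • xh μ) := by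
            apply Finset.sum_congr rfl
            intro ν _
            rw [hupd ν]
            by_cases h : ν = μ <;> simp [h]
        _ = (c • yh μ - c • xh μ) + (p:ℝ) • (c • xh μ) := by
            rw [Finset.sum_add_distrib, Finset.sum_ite_eq']
            simp [Finset.card_univ, ← Nat.cast_smul_eq_nsmul ℝ]
        _ = c • yh μ + ((p:ℝ) - 1) • (c • xh μ) := by
            rw [sub_smul, one_smul]; abel
    have hcp : ((p:ℝ) - 1) • (c • xh μ) = (1 - c) • xh μ := by
      rw [smul_smul]
      congr 1
      rw [hc, sub_mul, mul_inv_cancel₀ (ne_of_gt hp'), one_mul]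
    show yh μ - z μ = (1 - c) • (yh μ - xh μ)
    rw [this, hcp]
    module
  have key := hproj z hzX
  rw [hzeq, hnrm_smul] at key
  have habs : |1 - c| = 1 - c := abs_of_nonneg (by linarith)
  rw [habs] at key
  have hnonneg : 0 ≤ nrm (yh - xh) := by
    have h1 := hnrm_add (yh - xh) (-(yh - xh))
    have h2 : nrm (-(yh - xh)) = nrm (yh - xh) := by
      have := hnrm_smul (-1) (yh - xh)
      simpa using this
    have h3 : nrm ((yh - xh) + -(yh - xh)) = 0 := by
      rw [add_neg_cancel, (hnrm0 0).mpr rfl]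
    nlinarith
  have h0 : nrm (yh - xh) = 0 := by nlinarith
  have := (hnrm0 _).mp h0
  rw [sub_eq_zero] at this
  exact this
end
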